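/- arXiv:2011.12464 — 2 statements merged into one kernel-verified Lean document; each statement's English description precedes it below -/
import Mathlib

section
/- Let D₁ and D₂ be bounded, balanced, convex open subsets of ℂⁿ (respectively ℂᵐ), and let f : D₁ → D₂ be a holomorphic map with f(0) = 0. Then for every 0 < r ≤ 1, f maps r·D₁ into r·D₂, i.e., f(rD₁) ⊆ rD₂. -/
open Set Metric Pointwise

noncomputable section

/-- Inverse hyperbolic tangent. -/
def artanh (x : ℝ) : ℝ := (1/2) * Real.log ((1 + x) / (1 - x))

/-- Poincaré distance on the unit disk. -/
def poincare (a b : ℂ) : ℝ := artanh ‖(a - b) / (1 - (starRingEnd ℂ) a * b)‖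

variable {E : Type*} [NormedAddCommGroup E] [NormedSpace ℂ E]

/-- The Lempert function of a domain `D`. -/
def lempert (D : Set E) (z w : E) : ℝ :=
  sInf { r | ∃ (φ : ℂ → E) (α : ℂ), DifferentiableOn ℂ φ (ball 0 1) ∧
    MapsTo φ (ball 0 1) D ∧ φ 0 = z ∧ α ∈ ball (0:ℂ) 1 ∧ φ α = w ∧
    r = artanh ‖α‖ }

/-- The Kobayashi pseudodistance of a domain `D`, as the infimum over chains of
analytic disks of the sum of the corresponding Poincaré lengths. -/
def kobayashi (D : Set E) (z w : E) : ℝ :=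
  sInf { s | ∃ (n : ℕ) (p : ℕ → E), p 0 = z ∧ p n = w ∧ (∀ i ≤ n, p i ∈ D) ∧
    s = ∑ i ∈ Finset.range n, lempert D (p i) (p (i+1)) }

/-- The Kobayashi ball of radius `r` centered at `z` in `D`. -/
def kobayashiBall (D : Set E) (z : E) (r : ℝ) : Set E := { w ∈ D | kobayashi D z w < r }

/-- The Carathéodory pseudodistance of a domain `D`. -/
def caratheodory (D : Set E) (z w : E) : ℝ :=
  sSup { r | ∃ f : E → ℂ, DifferentiableOn ℂ f D ∧ MapsTo f D (ball 0 1) ∧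
    r = poincare (f z) (f w) }

/-- The Carathéodory ball of radius `r` centered at `z` in `D`. -/
def caratheodoryBall (D : Set E) (z : E) (r : ℝ) : Set E := { w ∈ D | caratheodory D z w < r }

/-- The squeezing function of a domain `D ⊆ E` (with respect to the unit ball of `E`). -/
def squeezing (D : Set E) (z : E) : ℝ :=
  sSup { r | ∃ f : E → E, DifferentiableOn ℂ f D ∧ InjOn f D ∧ MapsTo f D (ball 0 1) ∧
    f z = 0 ∧ ball (0:E) r ⊆ f '' D }

/-- The Fridman invariant of a domain `D ⊆ E` (with respect to the unit ball of `E`). -/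
def fridman (D : Set E) (z : E) : ℝ :=
  sSup { t | ∃ r > (0:ℝ), ∃ f : E → E, DifferentiableOn ℂ f (ball 0 1) ∧
    InjOn f (ball 0 1) ∧ MapsTo f (ball 0 1) D ∧ f 0 = z ∧
    kobayashiBall D z r ⊆ f '' (ball 0 1) ∧ t = Real.tanh r }

/-- The Fridman invariant defined via Carathéodory balls. -/
def fridmanC (D : Set E) (z : E) : ℝ :=
  sSup { t | ∃ r > (0:ℝ), ∃ f : E → E, DifferentiableOn ℂ f (ball 0 1) ∧
    InjOn f (ball 0 1) ∧ MapsTo f (ball 0 1) D ∧ f 0 = z ∧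
    caratheodoryBall D z r ⊆ f '' (ball 0 1) ∧ t = Real.tanh r }

/-- A set is balanced if `λ • z ∈ D` whenever `z ∈ D` and `|λ| ≤ 1`. -/
def IsBalanced (D : Set E) : Prop := ∀ z ∈ D, ∀ l : ℂ, ‖l‖ ≤ 1 → l • z ∈ D

/-- The Minkowski function of a (balanced) domain. -/
def minkowski (D : Set E) (z : E) : ℝ := sInf { t : ℝ | 0 < t ∧ (t⁻¹ : ℂ) • z ∈ D }

/-- `D` is homogeneous: its automorphism group acts transitively. -/
def IsHomogeneous (D : Set E) : Prop :=
  ∀ z ∈ D, ∀ w ∈ D, ∃ f g : E → E, DifferentiableOn ℂ f D ∧ DifferentiableOn ℂ g D ∧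
    MapsTo f D D ∧ MapsTo g D D ∧ (∀ x ∈ D, g (f x) = x) ∧ (∀ x ∈ D, f (g x) = x) ∧ f z = w

/-- `D` is completely hyperbolic: the Kobayashi pseudodistance is a distance and every
Kobayashi-Cauchy sequence in `D` converges (in the Kobayashi distance) to a point of `D`. -/
def IsCompletelyHyperbolic (D : Set E) : Prop :=
  (∀ z ∈ D, ∀ w ∈ D, kobayashi D z w = 0 → z = w) ∧
  (∀ u : ℕ → E, (∀ n, u n ∈ D) →
    (∀ ε > (0:ℝ), ∃ N, ∀ m ≥ N, ∀ n ≥ N, kobayashi D (u m) (u n) < ε) →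
    ∃ x ∈ D, Filter.Tendsto (fun n => kobayashi D (u n) x) Filter.atTop (nhds 0))

/-- The punctured unit disk in `ℂ`. -/
def puncturedDisk : Set ℂ := ball 0 1 \ {0}

end

open Set Metric Pointwise Filter Topology

/-! If `f (r • z) ∉ r • D₂`, Hahn–Banach separates `r⁻¹ • f (r • z)` from the open convex
balanced set `D₂` by a complex functional `L` with `‖L‖ < 1` on `D₂`, so that
`‖L (f (r • z))‖ ≥ r`. On the other hand, openness gives `s > 1` with `s • z ∈ D₁`, and the
classical Schwarz lemma for the disc map `μ ↦ L (f (μ • s • z))` yields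
`‖L (f (r • z))‖ ≤ r / s < r`. -/

section

variable {E : Type*} [NormedAddCommGroup E] [NormedSpace ℂ E]

theorem IsBalanced.zero_mem {D : Set E} (hD : IsBalanced D) (hne : D.Nonempty) :
    (0 : E) ∈ D := by
  obtain ⟨z, hz⟩ := hne
  simpa using hD z hz 0 (by simp)

theorem IsOpen.exists_one_lt_smul_mem {D : Set E} (hD : IsOpen D) {z : E} (hz : z ∈ D) :
    ∃ s : ℝ, 1 < s ∧ (s : ℂ) • z ∈ D := by
  have hnhds : ∀ᶠ s : ℝ in 𝓝 1, (s : ℂ) • z ∈ D :=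
    ((Complex.continuous_ofReal.smul continuous_const).tendsto 1).eventually
      (hD.mem_nhds (by simpa using hz))
  obtain ⟨s, hsD, hs1⟩ :=
    ((hnhds.filter_mono nhdsWithin_le_nhds).and (self_mem_nhdsWithin (s := Ioi 1))).exists
  exact ⟨s, hs1, hsD⟩

theorem IsBalanced.norm_apply_smul_le {D : Set E} (hD : IsBalanced D) {φ : E → ℂ}
    (hφ : DifferentiableOn ℂ φ D) (hmaps : MapsTo φ D (ball 0 1)) (hφ0 : φ 0 = 0)
    {z : E} (hz : z ∈ D) {μ : ℂ} (hμ : ‖μ‖ < 1) : ‖φ (μ • z)‖ ≤ ‖μ‖ := by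
  have hline : MapsTo (fun ν : ℂ => ν • z) (ball 0 1) D := fun ν hν =>
    hD z hz ν (mem_ball_zero_iff.1 hν).le
  refine Complex.norm_le_norm_of_mapsTo_ball (f := fun ν => φ (ν • z)) ?_ ?_
    (by simpa using hφ0) hμ
  · exact hφ.comp (differentiable_id.smul_const z).differentiableOn hline
  · exact (hmaps.comp hline).mono_right ball_subset_closedBall

theorem IsBalanced.norm_apply_smul_lt {D : Set E} (hD : IsBalanced D) (hDo : IsOpen D)
    {φ : E → ℂ} (hφ : DifferentiableOn ℂ φ D) (hmaps : MapsTo φ D (ball 0 1)) (hφ0 : φ 0 = 0)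
    {z : E} (hz : z ∈ D) {μ : ℂ} (hμ0 : μ ≠ 0) (hμ1 : ‖μ‖ ≤ 1) : ‖φ (μ • z)‖ < ‖μ‖ := by
  obtain ⟨s, hs1, hsz⟩ := hDo.exists_one_lt_smul_mem hz
  have hs0 : (s : ℂ) ≠ 0 := by exact_mod_cast (zero_lt_one.trans hs1).ne'
  have hnorm : ‖μ / s‖ = ‖μ‖ / s := by rw [norm_div, Complex.norm_of_nonneg (by linarith)]
  calc ‖φ (μ • z)‖ = ‖φ ((μ / s) • (s : ℂ) • z)‖ := by rw [smul_smul, div_mul_cancel₀ _ hs0]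
    _ ≤ ‖μ / s‖ := hD.norm_apply_smul_le hφ hmaps hφ0 hsz
        (by rw [hnorm]; exact (div_lt_one (by linarith)).2 (hμ1.trans_lt hs1))
    _ = ‖μ‖ / s := hnorm
    _ < ‖μ‖ := div_lt_self (norm_pos_iff.2 hμ0) hs1

theorem IsBalanced.exists_mapsTo_ball_one_le_norm {D : Set E} (hD : IsBalanced D)
    (hDc : Convex ℝ D) (hDo : IsOpen D) (h0 : (0 : E) ∈ D) {x : E} (hx : x ∉ D) :
    ∃ L : StrongDual ℂ E, MapsTo L D (ball 0 1) ∧ 1 ≤ ‖L x‖ := by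
  obtain ⟨L, hLx, hLD⟩ := RCLike.separate_convex_open_set (𝕜 := ℂ) h0 hDc hDo hx
  refine ⟨L, fun b hb => ?_, hLx ▸ Complex.re_le_norm (L x)⟩
  -- rotating `b` inside `D` turns the bound on `re (L b)` into one on `‖L b‖`
  obtain ⟨c, hc, hcb⟩ := Complex.exists_norm_eq_mul_self (L b)
  have hrot := hLD (c • b) (hD b hb c hc.le)
  rw [map_smul, smul_eq_mul, ← hcb] at hrot
  exact mem_ball_zero_iff.2 (by simpa using hrot)

end

theorem schwarz_balanced_convex_general {n m : ℕ}
    (D₁ : Set (EuclideanSpace ℂ (Fin n))) (D₂ : Set (EuclideanSpace ℂ (Fin m)))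
    (h₁o : IsOpen D₁) (h₁bal : IsBalanced D₁)
    (h₂o : IsOpen D₂) (h₂bal : IsBalanced D₂)
    (h₂c : Convex ℝ D₂)
    (f : EuclideanSpace ℂ (Fin n) → EuclideanSpace ℂ (Fin m))
    (hf : DifferentiableOn ℂ f D₁) (hmap : MapsTo f D₁ D₂) (hf0 : f 0 = 0)
    (r : ℝ) (hr0 : 0 < r) (hr1 : r ≤ 1) :
    f '' ((r : ℂ) • D₁) ⊆ (r : ℂ) • D₂ := by
  rintro - ⟨-, ⟨z, hz, rfl⟩, rfl⟩
  have hr : (r : ℂ) ≠ 0 := by exact_mod_cast hr0.ne'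
  have hnorm : ‖(r : ℂ)‖ = r := Complex.norm_of_nonneg hr0.le
  by_contra hx
  rw [mem_smul_set_iff_inv_smul_mem₀ hr] at hx
  obtain ⟨L, hLD, hLx⟩ := h₂bal.exists_mapsTo_ball_one_le_norm h₂c h₂o
    (hf0 ▸ hmap (h₁bal.zero_mem ⟨z, hz⟩)) hx
  have hlt : ‖L (f ((r : ℂ) • z))‖ < ‖(r : ℂ)‖ := h₁bal.norm_apply_smul_lt h₁o
    (L.differentiable.comp_differentiableOn hf) (hLD.comp hmap) (by simp [hf0]) hz hr
    (hnorm.le.trans hr1)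
  rw [map_smul, smul_eq_mul, norm_mul, norm_inv, hnorm] at hLx
  rw [hnorm] at hlt
  linarith [(le_inv_mul_iff₀ hr0).1 hLx]

/-- Schwarz lemma: a holomorphic map between bounded balanced convex domains fixing the
origin maps `r·D₁` into `r·D₂` for `0 < r ≤ 1`. -/
theorem schwarz_balanced_convex {n m : ℕ}
    (D₁ : Set (EuclideanSpace ℂ (Fin n))) (D₂ : Set (EuclideanSpace ℂ (Fin m)))
    (h₁o : IsOpen D₁) (h₁b : Bornology.IsBounded D₁) (h₁bal : IsBalanced D₁)
    (h₁c : Convex ℝ D₁)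
    (h₂o : IsOpen D₂) (h₂b : Bornology.IsBounded D₂) (h₂bal : IsBalanced D₂)
    (h₂c : Convex ℝ D₂)
    (f : EuclideanSpace ℂ (Fin n) → EuclideanSpace ℂ (Fin m))
    (hf : DifferentiableOn ℂ f D₁) (hmap : MapsTo f D₁ D₂) (hf0 : f 0 = 0)
    (r : ℝ) (hr0 : 0 < r) (hr1 : r ≤ 1) :
    f '' ((r : ℂ) • D₁) ⊆ (r : ℂ) • D₂ :=
  schwarz_balanced_convex_general D₁ D₂ h₁o h₁bal h₂o h₂bal h₂c f hf hmap hf0 r hr0 hr1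
end

section
/- Let D be a bounded, balanced, convex domain in ℂⁿ with Minkowski function l_D. Then for every z ∈ D, tanh(k_D(0, z)) = l_D(z), where k_D is the Kobayashi distance on D. -/
open Set Metric

open Set Metric

/-!
For `t` slightly above the Minkowski value `l = l_D(z)`, the disc `λ ↦ (λ / t) • z` lies in `D`
and passes through `z` at `λ = t`, so `k_D(0, z) ≤ artanh t`. Conversely `z / l` is a boundary
point, so Hahn–Banach and balancedness give a complex linear functional `L` with `‖L‖ < 1` on `D`
and `‖L z‖ ≥ l`. By the Schwarz–Pick lemma, `artanh ‖L‖` increases along an analytic disc by at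
most the Poincaré length of the disc, hence along a Kobayashi chain by at most its length, and
`artanh l ≤ k_D(0, z)`. The Minkowski function is Mathlib's `gauge`.
-/

open ComplexConjugate

lemma artanh_eq_real_artanh {x : ℝ} (hx : x ∈ Icc (-1) 1) : artanh x = Real.artanh x :=
  (Real.artanh_eq_half_log hx).symm

lemma artanh_zero : artanh 0 = 0 := by simp [artanh]

lemma artanh_nonneg {x : ℝ} (h0 : 0 ≤ x) (h1 : x < 1) : 0 ≤ artanh x := by
  rw [artanh_eq_real_artanh ⟨by linarith, h1.le⟩]
  exact Real.artanh_nonneg h0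

lemma artanh_le_artanh {x y : ℝ} (hx : -1 < x) (hy : y < 1) (hxy : x ≤ y) :
    artanh x ≤ artanh y := by
  rw [artanh_eq_real_artanh ⟨hx.le, by linarith⟩, artanh_eq_real_artanh ⟨by linarith, hy.le⟩]
  exact Real.artanh_le_artanh hx hy hxy

lemma tanh_artanh {x : ℝ} (hx : x ∈ Ioo (-1) 1) : Real.tanh (artanh x) = x := by
  rw [artanh_eq_real_artanh (Ioo_subset_Icc_self hx), Real.tanh_artanh hx]

lemma Real.tanh_monotone : Monotone Real.tanh := by
  intro x y h
  have hmem : ∀ t, Real.tanh t ∈ Ioo (-1) 1 := fun t => abs_lt.mp (Real.abs_tanh_lt_one t)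
  rwa [← Real.artanh_le_artanh_iff (hmem x) (hmem y), Real.artanh_tanh, Real.artanh_tanh]

lemma artanh_add {a b : ℝ} (ha0 : 0 ≤ a) (ha1 : a < 1) (hb0 : 0 ≤ b) (hb1 : b < 1) :
    artanh a + artanh b = artanh ((a + b) / (1 + a * b)) := by
  have hab : 0 < 1 + a * b := by positivity
  have hq : (1 + (a + b) / (1 + a * b)) / (1 - (a + b) / (1 + a * b))
      = (1 + a) / (1 - a) * ((1 + b) / (1 - b)) := by
    have : (1 - a) * (1 - b) ≠ 0 := mul_ne_zero (by linarith) (by linarith)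
    field_simp
    ring
  unfold artanh
  rw [hq, Real.log_mul (div_pos (by linarith) (by linarith)).ne'
    (div_pos (by linarith) (by linarith)).ne']
  ring

lemma one_sub_conj_mul_ne_zero {a w : ℂ} (ha : ‖a‖ < 1) (hw : ‖w‖ < 1) :
    1 - conj a * w ≠ 0 := by
  intro h
  have h1 : ‖conj a * w‖ = 1 := by rw [← sub_eq_zero.mp h, norm_one]
  rw [norm_mul, Complex.norm_conj] at h1
  nlinarith [norm_nonneg a, norm_nonneg w]

lemma normSq_one_sub_conj_mul_sub_normSq_sub (a w : ℂ) :
    Complex.normSq (1 - conj a * w) - Complex.normSq (w - a)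
      = (1 - Complex.normSq a) * (1 - Complex.normSq w) := by
  apply Complex.ofReal_injective
  push_cast
  simp only [← Complex.mul_conj, map_sub, map_mul, map_one, Complex.conj_conj]
  ring

lemma norm_sub_div_one_sub_conj_mul_lt_one {a w : ℂ} (ha : ‖a‖ < 1) (hw : ‖w‖ < 1) :
    ‖(w - a) / (1 - conj a * w)‖ < 1 := by
  have hden := one_sub_conj_mul_ne_zero ha hw
  rw [norm_div, div_lt_one (norm_pos_iff.mpr hden), ← sq_lt_sq₀ (norm_nonneg _) (norm_nonneg _),
    ← Complex.normSq_eq_norm_sq, ← Complex.normSq_eq_norm_sq, ← sub_pos,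
    normSq_one_sub_conj_mul_sub_normSq_sub, Complex.normSq_eq_norm_sq, Complex.normSq_eq_norm_sq]
  have ha2 : ‖a‖ ^ 2 < 1 := by nlinarith [norm_nonneg a]
  have hw2 : ‖w‖ ^ 2 < 1 := by nlinarith [norm_nonneg w]
  exact mul_pos (by linarith) (by linarith)

lemma add_div_one_add_conj_mul_of_eq_sub_div {a w v : ℂ} (ha : ‖a‖ < 1) (hw : ‖w‖ < 1)
    (hv : v = (w - a) / (1 - conj a * w)) : (v + a) / (1 + conj a * v) = w := by
  have hden := one_sub_conj_mul_ne_zero ha hw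
  have hna : 1 - conj a * a ≠ 0 := one_sub_conj_mul_ne_zero ha ha
  have hnum : v + a = w * (1 - conj a * a) / (1 - conj a * w) := by
    rw [hv, div_add' _ _ _ hden, div_left_inj' hden]; ring
  have hdenv : 1 + conj a * v = (1 - conj a * a) / (1 - conj a * w) := by
    rw [hv, mul_div_assoc', add_div' _ _ _ hden, div_left_inj' hden]; ring
  rw [hnum, hdenv, div_div_div_cancel_right₀ hden, mul_div_cancel_right₀ _ hna]

lemma norm_add_div_one_add_conj_mul_le {a v : ℂ} (ha : ‖a‖ < 1) (hv : ‖v‖ < 1) :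
    ‖(v + a) / (1 + conj a * v)‖ ≤ (‖v‖ + ‖a‖) / (1 + ‖v‖ * ‖a‖) := by
  set r := ‖a‖
  set s := ‖v‖
  have hr : 0 ≤ r := norm_nonneg a
  have hs : 0 ≤ s := norm_nonneg v
  set t := (v * conj a).re
  have ht : t ≤ s * r := by
    calc t ≤ ‖v * conj a‖ := Complex.re_le_norm _
      _ = s * r := by rw [norm_mul, Complex.norm_conj]
  have hnum : ‖v + a‖ ^ 2 = s ^ 2 + r ^ 2 + 2 * t := by
    rw [← Complex.normSq_eq_norm_sq, Complex.normSq_add, Complex.normSq_eq_norm_sq,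
      Complex.normSq_eq_norm_sq]
  have hden : ‖1 + conj a * v‖ ^ 2 = 1 + r ^ 2 * s ^ 2 + 2 * t := by
    rw [← Complex.normSq_eq_norm_sq, Complex.normSq_add, Complex.normSq_mul, Complex.normSq_conj,
      Complex.normSq_one, one_mul, Complex.conj_re, mul_comm (conj a) v,
      Complex.normSq_eq_norm_sq, Complex.normSq_eq_norm_sq]
  -- `(s + r)² ‖1 + ā v‖² - (1 + s r)² ‖v + a‖² = 2 (1 - s²) (1 - r²) (s r - t)`
  have key : (‖v + a‖ * (1 + s * r)) ^ 2 ≤ ((s + r) * ‖1 + conj a * v‖) ^ 2 := by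
    rw [mul_pow, mul_pow, hnum, hden]
    nlinarith [mul_nonneg (mul_nonneg (sub_nonneg.mpr ht)
      (by nlinarith : (0:ℝ) ≤ 1 - r ^ 2)) (by nlinarith : (0:ℝ) ≤ 1 - s ^ 2)]
  have hsr : s * r < 1 := by nlinarith
  have hpos : 0 < ‖1 + conj a * v‖ := by
    have ht' : -(s * r) ≤ t := by
      calc -(s * r) = -‖v * conj a‖ := by rw [norm_mul, Complex.norm_conj]
        _ ≤ t := neg_le_of_abs_le (Complex.abs_re_le_norm _)
    have hsq : 0 < ‖1 + conj a * v‖ ^ 2 := by rw [hden]; nlinarith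
    exact (norm_nonneg _).lt_of_ne' (sq_pos_iff.mp hsq)
  rw [norm_div, div_le_div_iff₀ hpos (by positivity)]
  exact (sq_le_sq₀ (by positivity) (by positivity)).mp key

theorem artanh_norm_le_of_mapsTo_ball {g : ℂ → ℂ} (hd : DifferentiableOn ℂ g (ball 0 1))
    (hm : MapsTo g (ball 0 1) (ball 0 1)) {α : ℂ} (hα : α ∈ ball (0:ℂ) 1) :
    artanh ‖g α‖ ≤ artanh ‖g 0‖ + artanh ‖α‖ := by
  have hg : ∀ w ∈ ball (0:ℂ) 1, ‖g w‖ < 1 := fun w hw => mem_ball_zero_iff.mp (hm hw)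
  set a := g 0
  have ha : ‖a‖ < 1 := hg 0 (mem_ball_self one_pos)
  have hα1 : ‖α‖ < 1 := mem_ball_zero_iff.mp hα
  -- Compose with the disc automorphism sending `a` to `0` and apply the Schwarz lemma.
  set h : ℂ → ℂ := fun w => (g w - a) / (1 - conj a * g w)
  have hhd : DifferentiableOn ℂ h (ball 0 1) :=
    (hd.sub_const a).div ((differentiableOn_const 1).sub ((differentiableOn_const _).mul hd))
      fun w hw => one_sub_conj_mul_ne_zero ha (hg w hw)
  have hhm : MapsTo h (ball 0 1) (closedBall 0 1) := fun w hw =>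
    mem_closedBall_zero_iff.mpr (norm_sub_div_one_sub_conj_mul_lt_one ha (hg w hw)).le
  have hv : ‖h α‖ ≤ ‖α‖ :=
    Complex.norm_le_norm_of_mapsTo_ball hhd hhm (by simp [h, a]) hα1
  have hv1 : ‖h α‖ < 1 := hv.trans_lt hα1
  have hgα : g α = (h α + a) / (1 + conj a * h α) :=
    (add_div_one_add_conj_mul_of_eq_sub_div ha (hg α hα) rfl).symm
  have hsum : (‖h α‖ + ‖a‖) / (1 + ‖h α‖ * ‖a‖) < 1 := by
    rw [div_lt_one (by positivity)]
    nlinarith [norm_nonneg (h α), norm_nonneg a]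
  calc artanh ‖g α‖ ≤ artanh ((‖h α‖ + ‖a‖) / (1 + ‖h α‖ * ‖a‖)) := by
        rw [hgα]
        exact artanh_le_artanh (neg_one_lt_zero.trans_le (norm_nonneg _)) hsum
          (norm_add_div_one_add_conj_mul_le ha hv1)
    _ = artanh ‖h α‖ + artanh ‖a‖ := (artanh_add (norm_nonneg _) hv1 (norm_nonneg _) ha).symm
    _ ≤ artanh ‖α‖ + artanh ‖a‖ := by
        gcongr ?_ + _
        exact artanh_le_artanh (neg_one_lt_zero.trans_le (norm_nonneg _)) hα1 hv
    _ = artanh ‖a‖ + artanh ‖α‖ := add_comm _ _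

lemma Complex.norm_cos_sq_add_norm_sin_sq (w : ℂ) :
    ‖Complex.cos w‖ ^ 2 + ‖Complex.sin w‖ ^ 2 = Real.cosh (2 * w.im) := by
  apply Complex.ofReal_injective
  push_cast
  rw [← Complex.mul_conj', ← Complex.mul_conj', ← Complex.cos_conj, ← Complex.sin_conj,
    ← Complex.cos_sub, Complex.sub_conj, Complex.cos_mul_I]
  push_cast
  rfl

lemma exists_differentiableOn_ball_abs_im_lt {T : ℝ} (hT : 0 < T) {x : ℝ} (hx : x < 0) :
    ∃ θ : ℂ → ℂ, DifferentiableOn ℂ θ (ball 0 1) ∧ (∀ w ∈ ball (0:ℂ) 1, |(θ w).im| < T) ∧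
      θ 0 = 0 ∧ ∃ α ∈ ball (0:ℂ) 1, θ α = x := by
  set β := 2 * T / Real.pi
  have hβ : 0 < β := by positivity
  refine ⟨fun w => β * Complex.log (1 + w), ?_, ?_, by simp, ?_⟩
  · intro w hw
    exact ((Complex.differentiableAt_log
      (Complex.mem_slitPlane_of_norm_lt_one (mem_ball_zero_iff.mp hw))).comp w
      ((differentiableAt_const 1).add differentiableAt_id)).const_mul _ |>.differentiableWithinAt
  · intro w hw
    have harg := Complex.arg_one_add_mem_Ioo (mem_ball_zero_iff.mp hw)
    rw [Complex.im_ofReal_mul, Complex.log_im, abs_mul, abs_of_pos hβ]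
    calc β * |Complex.arg (1 + w)| < β * (Real.pi / 2) :=
          mul_lt_mul_of_pos_left (abs_lt.mpr harg) hβ
      _ = T := by simp only [β]; field_simp
  · refine ⟨(Real.exp (x / β) - 1 : ℝ), ?_, ?_⟩
    · have h1 : Real.exp (x / β) < 1 := Real.exp_lt_one_iff.mpr (div_neg_of_neg_of_pos hx hβ)
      have h0 := Real.exp_pos (x / β)
      rw [mem_ball_zero_iff, Complex.norm_real, Real.norm_eq_abs, abs_lt]
      constructor <;> linarith
    · dsimp only
      rw [Complex.ofReal_sub, Complex.ofReal_one, add_sub_cancel,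
        ← Complex.ofReal_log (Real.exp_pos _).le, Real.log_exp, ← Complex.ofReal_mul,
        mul_div_cancel₀ _ hβ.ne']

section Kobayashi

variable {E : Type*} [NormedAddCommGroup E] [NormedSpace ℂ E] {D : Set E}

lemma artanh_norm_nonneg {α : ℂ} (hα : α ∈ ball (0:ℂ) 1) : 0 ≤ artanh ‖α‖ :=
  artanh_nonneg (norm_nonneg α) (mem_ball_zero_iff.mp hα)

lemma lempert_nonneg (D : Set E) (z w : E) : 0 ≤ lempert D z w :=
  Real.sInf_nonneg <| by rintro _ ⟨φ, α, -, -, -, hα, -, rfl⟩; exact artanh_norm_nonneg hα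

lemma lempert_le_artanh_norm {φ : ℂ → E} {α : ℂ} {z w : E}
    (hd : DifferentiableOn ℂ φ (ball 0 1)) (hm : MapsTo φ (ball 0 1) D) (hz : φ 0 = z)
    (hα : α ∈ ball (0:ℂ) 1) (hw : φ α = w) : lempert D z w ≤ artanh ‖α‖ :=
  csInf_le ⟨0, by rintro _ ⟨φ, α, -, -, -, hα, -, rfl⟩; exact artanh_norm_nonneg hα⟩
    ⟨φ, α, hd, hm, hz, hα, hw, rfl⟩

lemma kobayashi_nonneg (D : Set E) (z w : E) : 0 ≤ kobayashi D z w :=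
  Real.sInf_nonneg <| by
    rintro _ ⟨n, p, -, -, -, rfl⟩; exact Finset.sum_nonneg fun i _ => lempert_nonneg D _ _

lemma lempert_mem_kobayashi_chains {z w : E} (hz : z ∈ D) (hw : w ∈ D) :
    lempert D z w ∈ { s | ∃ (n : ℕ) (p : ℕ → E), p 0 = z ∧ p n = w ∧ (∀ i ≤ n, p i ∈ D) ∧
      s = ∑ i ∈ Finset.range n, lempert D (p i) (p (i+1)) } := by
  refine ⟨1, fun i => if i = 0 then z else w, rfl, rfl, fun i _ => ?_, by simp⟩
  dsimp only
  split_ifs <;> assumption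

lemma kobayashi_le_lempert {z w : E} (hz : z ∈ D) (hw : w ∈ D) :
    kobayashi D z w ≤ lempert D z w := by
  refine csInf_le ⟨0, ?_⟩ (lempert_mem_kobayashi_chains hz hw)
  rintro _ ⟨n, p, -, -, -, rfl⟩
  exact Finset.sum_nonneg fun i _ => lempert_nonneg D _ _

lemma artanh_norm_sub_le_lempert {f : E → ℂ} (hf : DifferentiableOn ℂ f D)
    (hfD : MapsTo f D (ball 0 1)) {z w : E}
    (hzw : ∃ (φ : ℂ → E) (α : ℂ), DifferentiableOn ℂ φ (ball 0 1) ∧ MapsTo φ (ball 0 1) D ∧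
      φ 0 = z ∧ α ∈ ball (0:ℂ) 1 ∧ φ α = w) :
    artanh ‖f w‖ - artanh ‖f z‖ ≤ lempert D z w := by
  obtain ⟨φ, α, hd, hm, h0, hα, h1⟩ := hzw
  refine le_csInf ⟨_, φ, α, hd, hm, h0, hα, h1, rfl⟩ ?_
  rintro _ ⟨ψ, γ, hd, hm, rfl, hγ, rfl, rfl⟩
  have := artanh_norm_le_of_mapsTo_ball (hf.comp hd hm) (hfD.comp hm) hγ
  simp only [Function.comp_apply] at this
  linarith

theorem artanh_norm_sub_le_kobayashi {f : E → ℂ} (hf : DifferentiableOn ℂ f D)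
    (hfD : MapsTo f D (ball 0 1))
    (hD : ∀ p ∈ D, ∀ q ∈ D, ∃ (φ : ℂ → E) (α : ℂ), DifferentiableOn ℂ φ (ball 0 1) ∧
      MapsTo φ (ball 0 1) D ∧ φ 0 = p ∧ α ∈ ball (0:ℂ) 1 ∧ φ α = q)
    {z w : E} (hz : z ∈ D) (hw : w ∈ D) :
    artanh ‖f w‖ - artanh ‖f z‖ ≤ kobayashi D z w := by
  refine le_csInf ⟨_, lempert_mem_kobayashi_chains hz hw⟩ ?_
  rintro _ ⟨n, p, rfl, rfl, hpD, rfl⟩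
  rw [← Finset.sum_range_sub (fun i => artanh ‖f (p i)‖)]
  exact Finset.sum_le_sum fun i hi => artanh_norm_sub_le_lempert hf hfD <|
    hD _ (hpD i (Finset.mem_range.mp hi).le) _ (hpD (i + 1) (Finset.mem_range.mp hi))

end Kobayashi

lemma isBalanced_iff_balanced {E : Type*} [NormedAddCommGroup E] [NormedSpace ℂ E] {D : Set E} :
    IsBalanced D ↔ Balanced ℂ D := by
  rw [balanced_iff_smul_mem]
  exact ⟨fun h _ ha _ hx => h _ hx _ ha, fun h _ hx _ ha => h ha hx⟩

lemma mem_of_gauge_lt_one {E : Type*} [NormedAddCommGroup E] [NormedSpace ℝ E] {D : Set E}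
    (ho : IsOpen D) (hc : Convex ℝ D) (h0 : (0 : E) ∈ D) {x : E} (hx : gauge D x < 1) : x ∈ D := by
  rw [← setOfPred_gauge_lt_one_eq_self_of_isOpen hc h0 ho]
  exact hx

section BalancedConvex

variable {E : Type*} [NormedAddCommGroup E] [NormedSpace ℂ E] [NormedSpace ℝ E]
  [IsScalarTower ℝ ℂ E] {D : Set E}

lemma minkowski_eq_gauge (D : Set E) (z : E) : minkowski D z = gauge D z := by
  unfold minkowski gauge
  congr 1
  ext t
  refine and_congr_right fun ht => ?_
  rw [mem_smul_set_iff_inv_smul_mem₀ ht.ne', ← Complex.ofReal_inv,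
    RCLike.real_smul_eq_coe_smul (K := ℂ)]
  rfl

lemma exists_strongDual_norm_lt_one_of_notMem (ho : IsOpen D) (hc : Convex ℝ D)
    (hbal : Balanced ℂ D) (h0 : (0 : E) ∈ D) {x : E} (hx : x ∉ D) :
    ∃ L : StrongDual ℂ E, (∀ y ∈ D, ‖L y‖ < 1) ∧ 1 ≤ ‖L x‖ := by
  obtain ⟨f, hf⟩ := RCLike.geometric_hahn_banach_open_point (𝕜 := ℂ) hc ho hx
  set c := (f x).re
  have hc0 : 0 < c := by simpa using hf 0 h0
  -- Rotating `y` inside the balanced set `D` turns `f y` into the real number `‖f y‖`.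
  have hfD : ∀ y ∈ D, ‖f y‖ < c := by
    intro y hy
    set u := Complex.exp (↑(-Complex.arg (f y)) * Complex.I)
    have hu : ‖u‖ = 1 := Complex.norm_exp_ofReal_mul_I _
    have huy : f (u • y) = ‖f y‖ := by
      rw [map_smul, smul_eq_mul]
      conv_lhs => rw [← Complex.norm_mul_exp_arg_mul_I (f y)]
      rw [mul_left_comm, ← Complex.exp_add]
      push_cast
      simp
    simpa [huy] using hf _ (hbal.smul_mem hu.le hy)
  refine ⟨(c⁻¹ : ℂ) • f, fun y hy => ?_, ?_⟩
  · rw [smul_apply, smul_eq_mul, norm_mul, norm_inv, Complex.norm_real,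
      Real.norm_of_nonneg hc0.le, inv_mul_lt_one₀ hc0]
    exact hfD y hy
  · rw [smul_apply, smul_eq_mul, norm_mul, norm_inv, Complex.norm_real,
      Real.norm_of_nonneg hc0.le, le_inv_mul_iff₀ hc0, mul_one]
    exact Complex.re_le_norm _

/-- The disc is `w ↦ cos² θ(w) • p + sin² θ(w) • q` with `θ` mapping the unit disc into a thin
horizontal strip, where `‖cos θ‖² + ‖sin θ‖² = cosh (2 Im θ)` is so close to `1` that the gauge
of `D` stays below `1`. -/
theorem exists_analyticDisc (ho : IsOpen D) (hc : Convex ℝ D) (hbal : Balanced ℂ D) {p q : E}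
    (hp : p ∈ D) (hq : q ∈ D) :
    ∃ (φ : ℂ → E) (α : ℂ), DifferentiableOn ℂ φ (ball 0 1) ∧ MapsTo φ (ball 0 1) D ∧
      φ 0 = p ∧ α ∈ ball (0:ℂ) 1 ∧ φ α = q := by
  have h0 : (0 : E) ∈ D := hbal.zero_mem ⟨p, hp⟩
  have habs : Absorbent ℝ D := absorbent_nhds_zero (ho.mem_nhds h0)
  set m := max (gauge D p) (gauge D q)
  have hm0 : 0 ≤ m := (gauge_nonneg p).trans (le_max_left _ _)
  have hm1 : m < 1 := max_lt (gauge_lt_one_of_mem_of_isOpen ho hp)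
    (gauge_lt_one_of_mem_of_isOpen ho hq)
  set S := 2 / (1 + m)
  have hS1 : 1 < S := by rw [lt_div_iff₀ (by linarith)]; linarith
  have hmS : m * S < 1 := by
    rw [mul_div_assoc', div_lt_one (by linarith)]; linarith
  obtain ⟨θ, hθd, hθim, hθ0, α, hα, hθα⟩ :=
    exists_differentiableOn_ball_abs_im_lt (half_pos (Real.arcosh_pos hS1))
      (neg_lt_zero.mpr (half_pos Real.pi_pos))
  refine ⟨fun w => Complex.cos (θ w) ^ 2 • p + Complex.sin (θ w) ^ 2 • q, α, ?_, ?_, ?_, hα, ?_⟩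
  · exact ((Complex.differentiable_cos.comp_differentiableOn hθd).pow 2).smul_const p |>.add
      (((Complex.differentiable_sin.comp_differentiableOn hθd).pow 2).smul_const q)
  · intro w hw
    refine mem_of_gauge_lt_one ho hc h0 ?_
    have hcosh : Real.cosh (2 * (θ w).im) < S := by
      rw [← Real.cosh_arcosh hS1.le, Real.cosh_lt_cosh, abs_mul, abs_two,
        abs_of_nonneg (Real.arcosh_nonneg hS1.le)]
      linarith [hθim w hw]
    calc gauge D (Complex.cos (θ w) ^ 2 • p + Complex.sin (θ w) ^ 2 • q)
        ≤ ‖Complex.cos (θ w)‖ ^ 2 * gauge D p + ‖Complex.sin (θ w)‖ ^ 2 * gauge D q := by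
          refine (gauge_add_le hc habs _ _).trans_eq ?_
          rw [gauge_smul hbal, gauge_smul hbal, norm_pow, norm_pow]
      _ ≤ (‖Complex.cos (θ w)‖ ^ 2 + ‖Complex.sin (θ w)‖ ^ 2) * m := by
          rw [add_mul]
          gcongr
          exacts [le_max_left _ _, le_max_right _ _]
      _ ≤ S * m := by
          rw [Complex.norm_cos_sq_add_norm_sin_sq]
          exact mul_le_mul_of_nonneg_right hcosh.le hm0
      _ < 1 := by linarith
  · simp [hθ0]
  · simp only [hθα]
    push_cast
    simp

theorem tanh_kobayashi_zero_le_gauge (ho : IsOpen D) (hc : Convex ℝ D) (hbal : Balanced ℂ D)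
    {z : E} (hz : z ∈ D) : Real.tanh (kobayashi D 0 z) ≤ gauge D z := by
  refine le_of_forall_gt_imp_ge_of_dense fun t ht => ?_
  rcases le_or_gt 1 t with ht1 | ht1
  · exact (Real.tanh_lt_one _).le.trans ht1
  have ht0 : 0 < t := (gauge_nonneg z).trans_lt ht
  have hzt : (t⁻¹ : ℂ) • z ∈ D := by
    refine mem_of_gauge_lt_one ho hc (hbal.zero_mem ⟨z, hz⟩) ?_
    rw [gauge_smul hbal, norm_inv, Complex.norm_real, Real.norm_of_nonneg ht0.le,
      inv_mul_lt_one₀ ht0]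
    exact ht
  have hlem : lempert D 0 z ≤ artanh t := by
    simpa [abs_of_pos ht0] using lempert_le_artanh_norm (D := D) (α := t)
      (φ := fun w : ℂ => w • (t⁻¹ : ℂ) • z) (differentiable_id.smul_const _).differentiableOn
      (fun w hw => hbal.smul_mem (mem_ball_zero_iff.mp hw).le hzt) (zero_smul _ _)
      (by simpa [abs_of_pos ht0] using ht1) (by simp [smul_smul, ht0.ne'])
  calc Real.tanh (kobayashi D 0 z) ≤ Real.tanh (artanh t) :=
        Real.tanh_monotone ((kobayashi_le_lempert (hbal.zero_mem ⟨z, hz⟩) hz).trans hlem)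
    _ = t := tanh_artanh ⟨by linarith, ht1⟩

theorem gauge_le_tanh_kobayashi_zero (ho : IsOpen D) (hc : Convex ℝ D) (hbal : Balanced ℂ D)
    {z : E} (hz : z ∈ D) : gauge D z ≤ Real.tanh (kobayashi D 0 z) := by
  have h0 : (0 : E) ∈ D := hbal.zero_mem ⟨z, hz⟩
  rcases (gauge_nonneg (s := D) z).eq_or_lt with hl | hl
  · rw [← hl, ← Real.tanh_zero]
    exact Real.tanh_monotone (kobayashi_nonneg D 0 z)
  set l := gauge D z
  have hboundary : l⁻¹ • z ∉ D := fun h => by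
    have := gauge_lt_one_of_mem_of_isOpen ho h
    rw [gauge_smul_of_nonneg (inv_nonneg.mpr hl.le), smul_eq_mul, inv_mul_cancel₀ hl.ne'] at this
    exact this.false
  obtain ⟨L, hLD, hLx⟩ := exists_strongDual_norm_lt_one_of_notMem ho hc hbal h0 hboundary
  have hLz : l ≤ ‖L z‖ := by
    rwa [ContinuousLinearMap.map_smul_of_tower, norm_smul, norm_inv, Real.norm_of_nonneg hl.le,
      le_inv_mul_iff₀ hl, mul_one] at hLx
  have hkob : artanh ‖L z‖ ≤ kobayashi D 0 z := by
    have := artanh_norm_sub_le_kobayashi L.differentiable.differentiableOn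
      (fun y hy => mem_ball_zero_iff.mpr (hLD y hy))
      (fun p hp q hq => exists_analyticDisc ho hc hbal hp hq) h0 hz
    rwa [map_zero, norm_zero, artanh_zero, sub_zero] at this
  calc l = Real.tanh (artanh l) := (tanh_artanh ⟨by linarith, hLz.trans_lt (hLD z hz)⟩).symm
    _ ≤ Real.tanh (kobayashi D 0 z) :=
        Real.tanh_monotone ((artanh_le_artanh (by linarith) (hLD z hz) hLz).trans hkob)

end BalancedConvex

theorem tanh_kobayashi_eq_minkowski_general {n : ℕ} (D : Set (EuclideanSpace ℂ (Fin n)))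
    (ho : IsOpen D) (hbal : IsBalanced D) (hc : Convex ℝ D)
    (z : EuclideanSpace ℂ (Fin n)) (hz : z ∈ D) :
    Real.tanh (kobayashi D 0 z) = minkowski D z := by
  rw [isBalanced_iff_balanced] at hbal
  rw [minkowski_eq_gauge]
  exact le_antisymm (tanh_kobayashi_zero_le_gauge ho hc hbal hz)
    (gauge_le_tanh_kobayashi_zero ho hc hbal hz)

/-- On a bounded balanced convex domain, `tanh (k_D(0, z)) = l_D(z)` for all `z ∈ D`. -/
theorem tanh_kobayashi_eq_minkowski {n : ℕ} (D : Set (EuclideanSpace ℂ (Fin n)))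
    (ho : IsOpen D) (hb : Bornology.IsBounded D) (hbal : IsBalanced D) (hc : Convex ℝ D)
    (z : EuclideanSpace ℂ (Fin n)) (hz : z ∈ D) :
    Real.tanh (kobayashi D 0 z) = minkowski D z :=
  tanh_kobayashi_eq_minkowski_general D ho hbal hc z hz
end
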